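/- arXiv:2310.11443 — 10 statements merged into one kernel-verified Lean document; each statement's English description precedes it below -/
import Mathlib

section
/- Let n, m, k ≥ 3 and let T = (t₁,…,tₙ) ∈ ℂⁿ, S = (s₁,…,s_m) ∈ ℂᵐ, R = (r₁,…,r_k) ∈ ℂᵏ. Then for every i ∈ {1,…,n}, (T ∘ᵢ S) ∘_{i+m−1} R ≠ T ∘ᵢ (S ∘ₘ R). (In the paper this is stated for quiddity sequences; the proof shows the two tuples always differ entrywise, e.g. one has entry t_i+s₁+1 where the other has t_i+s₁+2.) -/
/-
The two sides already differ at position `i`, where `S` is glued into `T`.  On the left this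
entry is `tᵢ + s₁ + 1`, and gluing `R` in afterwards at position `i + m - 1` leaves it alone; on
the right the first entry of `S ∘ₘ R` is `s₁ + 1`, so the entry is `tᵢ + s₁ + 2`.
-/

/-- The partial composition `T ∘ᵢ S` of two tuples (lists) of complex numbers, with
`1`-based index `i`.  For `1 ≤ i ≤ n-1` (i.e. `i < T.length`) it is
`(t₁,…,t_{i−1}, t_i+s₁+1, s₂,…,s_{m−1}, s_m+1, t_{i+1}+1, t_{i+2},…,tₙ)`,
and for `i = n` it is `(t₁+1, t₂,…,t_{n−1}, tₙ+s₁+1, s₂,…,s_{m−1}, s_m+1)`. -/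
noncomputable def qcomp (T S : List ℂ) (i : ℕ) : List ℂ :=
  if i < T.length then
    T.take (i - 1) ++ (T.getD (i - 1) 0 + S.getD 0 0 + 1) ::
      ((S.drop 1).dropLast ++ (S.getLastD 0 + 1) :: (T.getD i 0 + 1) :: T.drop (i + 1))
  else
    (T.getD 0 0 + 1) :: ((T.drop 1).dropLast ++ (T.getLastD 0 + S.getD 0 0 + 1) ::
      ((S.drop 1).dropLast ++ [S.getLastD 0 + 1]))

theorem length_qcomp {T S : List ℂ} {i : ℕ} (hi : 1 ≤ i) (hT : 2 ≤ T.length)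
    (hS : 2 ≤ S.length) : (qcomp T S i).length = T.length + S.length - 1 := by
  unfold qcomp
  split_ifs <;>
    simp only [List.length_append, List.length_take, List.length_cons, List.length_dropLast,
      List.length_drop, List.length_nil] <;> omega

theorem getD_zero_qcomp_of_length_le (T S : List ℂ) {i : ℕ} (hi : T.length ≤ i) :
    (qcomp T S i).getD 0 0 = T.getD 0 0 + 1 := by
  rw [qcomp, if_neg (by omega), List.getD_cons_zero]

/-- Position `i` (1-based) is where `S` is glued in, for `i < T.length` and for `i = T.length`. -/
theorem getD_qcomp_sub_one (T S : List ℂ) {i : ℕ} (hi : i ≤ T.length) (hT : 2 ≤ T.length) :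
    (qcomp T S i).getD (i - 1) 0 = T.getD (i - 1) 0 + S.getD 0 0 + 1 := by
  unfold qcomp
  split_ifs with h
  · have hlen : (T.take (i - 1)).length = i - 1 := by
      simp only [List.length_take]; omega
    rw [List.getD_append_right _ _ _ _ hlen.le, hlen, Nat.sub_self, List.getD_cons_zero]
  · obtain rfl : i = T.length := by omega
    obtain ⟨j, hj⟩ : ∃ j, T.length = j + 2 := ⟨T.length - 2, by omega⟩
    have hlen : ((T.drop 1).dropLast).length = j := by
      simp only [List.length_dropLast, List.length_drop]; omega
    rw [hj, show j + 2 - 1 = j + 1 by omega, List.getD_cons_succ,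
      List.getD_append_right _ _ _ _ hlen.le, hlen, Nat.sub_self, List.getD_cons_zero,
      List.getLastD_eq_getLast?, List.getLast?_eq_getElem?, hj, List.getD_eq_getElem?_getD]
    rfl

theorem getD_qcomp_of_lt_sub_one (T S : List ℂ) {i j : ℕ} (hi : i < T.length)
    (hj : j < i - 1) : (qcomp T S i).getD j 0 = T.getD j 0 := by
  rw [qcomp, if_pos hi,
    List.getD_append _ _ _ _ (by simp only [List.length_take]; omega)]
  simp [List.getD_eq_getElem?_getD, hj]

theorem getD_qcomp_of_length_le (T S : List ℂ) {i j : ℕ} (hi : T.length ≤ i) (hj₀ : 1 ≤ j)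
    (hj : j + 1 < T.length) : (qcomp T S i).getD j 0 = T.getD j 0 := by
  obtain ⟨j, rfl⟩ : ∃ j', j = j' + 1 := ⟨j - 1, by omega⟩
  rw [qcomp, if_neg (by omega), List.getD_cons_succ,
    List.getD_append _ _ _ _ (by simp only [List.length_dropLast, List.length_drop]; omega)]
  simp only [List.getD_eq_getElem?_getD, List.getElem?_dropLast, List.length_drop,
    List.getElem?_drop]
  rw [if_pos (by omega), Nat.add_comm]

theorem quiddity_comp_not_assoc_at_m_general (n m : ℕ) (hn : 3 ≤ n) (hm : 3 ≤ m)
    (T S R : List ℂ) (hT : T.length = n) (hS : S.length = m) :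
    ∀ i, 1 ≤ i → i ≤ n →
      qcomp (qcomp T S i) R (i + m - 1) ≠ qcomp T (qcomp S R m) i := by
  intro i hi₁ hin heq
  have hTS : (qcomp T S i).length = n + m - 1 := by
    rw [length_qcomp hi₁ (by omega) (by omega), hT, hS]
  have hlhs : (qcomp (qcomp T S i) R (i + m - 1)).getD (i - 1) 0 =
      T.getD (i - 1) 0 + S.getD 0 0 + 1 := by
    rw [← getD_qcomp_sub_one T S (by omega) (by omega)]
    rcases hin.lt_or_eq with hlt | rfl
    · exact getD_qcomp_of_lt_sub_one _ _ (by omega) (by omega)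
    · exact getD_qcomp_of_length_le _ _ (by omega) (by omega) (by omega)
  have hrhs : (qcomp T (qcomp S R m) i).getD (i - 1) 0 =
      T.getD (i - 1) 0 + (S.getD 0 0 + 1) + 1 := by
    rw [getD_qcomp_sub_one _ _ (by omega) (by omega),
      getD_zero_qcomp_of_length_le _ _ hS.le]
  have := congrArg (·.getD (i - 1) 0) heq
  simp only [hlhs, hrhs] at this
  exact one_ne_zero (by linear_combination -this)

/-- For all `i ∈ {1,…,n}` one has `(T ∘ᵢ S) ∘_{i+m−1} R ≠ T ∘ᵢ (S ∘ₘ R)`. -/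
theorem quiddity_comp_not_assoc_at_m (n m k : ℕ) (hn : 3 ≤ n) (hm : 3 ≤ m) (hk : 3 ≤ k)
    (T S R : List ℂ) (hT : T.length = n) (hS : S.length = m) (hR : R.length = k) :
    ∀ i, 1 ≤ i → i ≤ n →
      qcomp (qcomp T S i) R (i + m - 1) ≠ qcomp T (qcomp S R m) i :=
  quiddity_comp_not_assoc_at_m_general n m hn hm T S R hT hS
end

section
/- Let A = (a₁,…,aₙ) and B = (b₁,…,b_m) be generalized quiddity sequences (of lengths n, m ≥ 2). Then for every k ∈ {1,…,n}, the tuple A •ₖ B is a generalized quiddity sequence of length n+m−1. -/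
noncomputable def Mmat (a : ℂ) : Matrix (Fin 2) (Fin 2) ℂ := !![a, -1; 1, 0]

/-- A generalized quiddity sequence: a tuple `(a₁,…,aₙ)` with
`M(aₙ)·M(aₙ₋₁)···M(a₁) = -Id`. -/
def IsGQS (A : List ℂ) : Prop := (A.reverse.map Mmat).prod = -1

/-- The partial composition `A •ₖ B`, with `1`-based index `k`.  For `2 ≤ k ≤ n`
it is `(a₁,…,a_{k−2}, a_{k−1}+1, b₂+1, b₃,…,b_m, a_k+b₁+1, a_{k+1},…,aₙ)`,
and for `k = 1` it is `(a₁+b₁+1, a₂,…,a_{n−1}, aₙ+1, b₂+1, b₃,…,b_m)`. -/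
noncomputable def bcomp (A B : List ℂ) (k : ℕ) : List ℂ :=
  if k = 1 then
    (A.getD 0 0 + B.getD 0 0 + 1) :: ((A.drop 1).dropLast ++ (A.getLastD 0 + 1) ::
      (B.getD 1 0 + 1) :: B.drop 2)
  else
    A.take (k - 2) ++ (A.getD (k - 2) 0 + 1) :: (B.getD 1 0 + 1) ::
      (B.drop 2 ++ (A.getD (k - 1) 0 + B.getD 0 0 + 1) :: A.drop k)

/-!
Write `P(a₁, …, aₙ) = M(aₙ)⋯M(a₁)`. If `(b₁, b₂, C)` is a generalized quiddity sequence then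
`P(C) = -M(b₁)⁻¹M(b₂)⁻¹`, and since `M(d + b₁)M(b₁)⁻¹` and `M(b₂)⁻¹M(c + b₂)` do not depend on
the `bᵢ` while `(M(0)⁻¹)² = -1`, inserting `B` between adjacent entries `c, d` of a sequence as
`(…, c + b₂, C, d + b₁, …)` does not change its product. For `k ≥ 2`, `A •ₖ B` arises this way
from the blow-up `(…, aₖ₋₁ + 1, 1, aₖ + 1, …)` of `A`, which has the same product as `A` because
`M(y + 1)M(1)M(x + 1) = M(y)M(x)`. The case `k = 1` reduces to `k = 2` by rotating sequences:
`XY = -1` if and only if `YX = -1`.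
-/

noncomputable def mprod (L : List ℂ) : Matrix (Fin 2) (Fin 2) ℂ := (L.reverse.map Mmat).prod

@[simp]
lemma mprod_cons (a : ℂ) (L : List ℂ) : mprod (a :: L) = mprod L * Mmat a := by
  simp [mprod]

@[simp]
lemma mprod_append (L M : List ℂ) : mprod (L ++ M) = mprod M * mprod L := by
  simp [mprod]

noncomputable def Nmat (a : ℂ) : Matrix (Fin 2) (Fin 2) ℂ := !![0, 1; -1, a]

lemma Mmat_mul_Nmat (a : ℂ) : Mmat a * Nmat a = 1 := by
  simp [Mmat, Nmat, Matrix.one_fin_two]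

lemma Mmat_add_mul_Nmat (a b : ℂ) : Mmat (a + b) * Nmat b = Mmat a * Nmat 0 := by
  simp [Mmat, Nmat]

lemma Nmat_mul_Mmat_add (a b : ℂ) : Nmat a * Mmat (b + a) = Nmat 0 * Mmat b := by
  simp [Mmat, Nmat]

lemma Nmat_zero_mul_self : Nmat 0 * Nmat 0 = -1 := by
  simp [Nmat, Matrix.one_fin_two]

lemma Mmat_add_one_mul_Mmat_one_mul_Mmat_add_one (x y : ℂ) :
    Mmat (y + 1) * Mmat 1 * Mmat (x + 1) = Mmat y * Mmat x := by
  simp only [Mmat, Matrix.mul_fin_two]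
  ring_nf

lemma mprod_eq_of_isGQS_cons_cons {b₁ b₂ : ℂ} {C : List ℂ} (hB : IsGQS (b₁ :: b₂ :: C)) :
    mprod C = -(Nmat b₁ * Nmat b₂) := by
  have h : mprod (b₁ :: b₂ :: C) = -1 := hB
  rw [mprod_cons, mprod_cons] at h
  calc mprod C = mprod C * Mmat b₂ * Mmat b₁ * Nmat b₁ * Nmat b₂ := by
        simp only [mul_assoc, Mmat_mul_Nmat, mul_one]
    _ = -(Nmat b₁ * Nmat b₂) := by rw [h]; noncomm_ring

lemma mprod_insert_isGQS {b₁ b₂ : ℂ} {C : List ℂ} (hB : IsGQS (b₁ :: b₂ :: C))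
    (c d : ℂ) (R : List ℂ) :
    mprod ((c + b₂) :: (C ++ (d + b₁) :: R)) = mprod (c :: d :: R) := by
  simp only [mprod_cons, mprod_append, mprod_eq_of_isGQS_cons_cons hB]
  calc mprod R * Mmat (d + b₁) * -(Nmat b₁ * Nmat b₂) * Mmat (c + b₂)
      = -(mprod R * (Mmat (d + b₁) * Nmat b₁) * (Nmat b₂ * Mmat (c + b₂))) := by noncomm_ring
    _ = -(mprod R * Mmat d * (Nmat 0 * Nmat 0) * Mmat c) := by
        rw [Mmat_add_mul_Nmat, Nmat_mul_Mmat_add]; noncomm_ring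
    _ = mprod R * Mmat d * Mmat c := by rw [Nmat_zero_mul_self]; noncomm_ring

lemma mprod_blowup (x y : ℂ) (R : List ℂ) :
    mprod ((x + 1) :: 1 :: (y + 1) :: R) = mprod (x :: y :: R) := by
  simp only [mprod_cons, mul_assoc, ← Mmat_add_one_mul_Mmat_one_mul_Mmat_add_one x y]

lemma mprod_glue {b₁ b₂ : ℂ} {C : List ℂ} (hB : IsGQS (b₁ :: b₂ :: C)) (L R : List ℂ) (x y : ℂ) :
    mprod (L ++ (x + 1) :: (b₂ + 1) :: (C ++ (y + b₁ + 1) :: R)) = mprod (L ++ x :: y :: R) := by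
  rw [add_comm b₂, add_right_comm y, mprod_append, mprod_cons, mprod_insert_isGQS hB,
    ← mprod_cons, mprod_blowup, mprod_append]

lemma mul_eq_neg_one_comm {R : Type*} [Ring R] [IsDedekindFiniteMonoid R] {X Y : R}
    (h : X * Y = -1) : Y * X = -1 := by
  have : (-Y) * X = 1 := mul_eq_one_comm.mp (by rw [mul_neg, h, neg_neg])
  rwa [neg_mul, neg_eq_iff_eq_neg] at this

lemma IsGQS.append_comm {L M : List ℂ} (h : IsGQS (L ++ M)) : IsGQS (M ++ L) := by
  have h' : mprod (L ++ M) = -1 := h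
  show mprod (M ++ L) = -1
  rw [mprod_append] at h' ⊢
  exact mul_eq_neg_one_comm h'

lemma bcomp_append_cons_cons (L R C : List ℂ) (x y b₁ b₂ : ℂ) :
    bcomp (L ++ x :: y :: R) (b₁ :: b₂ :: C) (L.length + 2) =
      L ++ (x + 1) :: (b₂ + 1) :: (C ++ (y + b₁ + 1) :: R) := by
  simp [bcomp]

lemma bcomp_cons_concat_one (a l : ℂ) (D : List ℂ) (b₁ b₂ : ℂ) (C : List ℂ) :
    bcomp (a :: (D ++ [l])) (b₁ :: b₂ :: C) 1 =
      ((a + b₁ + 1) :: D) ++ (l + 1) :: (b₂ + 1) :: C := by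
  simp [bcomp, List.getLast?_cons]

lemma IsGQS.glue {L R C : List ℂ} {x y b₁ b₂ : ℂ} (hA : IsGQS (L ++ x :: y :: R))
    (hB : IsGQS (b₁ :: b₂ :: C)) :
    IsGQS (L ++ (x + 1) :: (b₂ + 1) :: (C ++ (y + b₁ + 1) :: R)) :=
  (mprod_glue hB L R x y).trans hA

-- `A •₁ B` is a rotation of `A' •₂ B` for the rotation `A' = (aₙ, a₁, …, aₙ₋₁)` of `A`.
lemma IsGQS.glue_around {a l b₁ b₂ : ℂ} {C D : List ℂ} (hA : IsGQS (a :: (D ++ [l])))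
    (hB : IsGQS (b₁ :: b₂ :: C)) :
    IsGQS (((a + b₁ + 1) :: D) ++ (l + 1) :: (b₂ + 1) :: C) := by
  have hA' : IsGQS ([] ++ l :: a :: D) := IsGQS.append_comm (L := a :: D) (M := [l]) hA
  exact IsGQS.append_comm (hA'.glue hB)

lemma List.exists_eq_append_cons_cons {α : Type*} (A : List α) {i : ℕ} (h : i + 2 ≤ A.length) :
    ∃ L x y R, A = L ++ x :: y :: R ∧ L.length = i :=
  ⟨A.take i, A[i], A[i + 1], A.drop (i + 2), by simp, by simp; omega⟩

lemma List.exists_eq_cons_append_singleton {α : Type*} :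
    ∀ A : List α, 2 ≤ A.length → ∃ a D l, A = a :: (D ++ [l])
  | a :: b :: T, _ => ⟨a, (b :: T).dropLast, (b :: T).getLast (List.cons_ne_nil b T),
      by rw [List.dropLast_append_getLast]⟩

/-- If `A` and `B` are generalized quiddity sequences of lengths `n, m ≥ 2`, then
`A •ₖ B` is a generalized quiddity sequence of length `n+m−1`, for every
`k ∈ {1,…,n}`. -/
theorem gqs_closed_under_bullet (n m : ℕ) (hn : 2 ≤ n) (hm : 2 ≤ m) (A B : List ℂ)
    (hA : A.length = n) (hB : B.length = m) (hAq : IsGQS A) (hBq : IsGQS B) :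
    ∀ k, 1 ≤ k → k ≤ n →
      IsGQS (bcomp A B k) ∧ (bcomp A B k).length = n + m - 1 := by
  intro k hk1 hkn
  obtain ⟨b₁, b₂, C, rfl⟩ : ∃ b₁ b₂ C, B = b₁ :: b₂ :: C := by
    obtain ⟨L, b₁, b₂, C, rfl, hL⟩ := B.exists_eq_append_cons_cons (i := 0) (by omega)
    exact ⟨b₁, b₂, C, by rw [List.length_eq_zero_iff.mp hL, List.nil_append]⟩
  obtain rfl | hk2 := eq_or_lt_of_le hk1
  · obtain ⟨a, D, l, rfl⟩ := A.exists_eq_cons_append_singleton (by omega)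
    rw [bcomp_cons_concat_one]
    exact ⟨hAq.glue_around hBq, by simp at hA hB ⊢; omega⟩
  · obtain ⟨L, x, y, R, rfl, hL⟩ := A.exists_eq_append_cons_cons (i := k - 2) (by omega)
    obtain rfl : k = L.length + 2 := by omega
    rw [bcomp_append_cons_cons]
    exact ⟨hAq.glue hBq, by simp at hA hB ⊢; omega⟩
end

section
/- Let A = (a₁,…,aₙ) and B = (b₁,…,b_m) be generalized quiddity sequences (of lengths n, m ≥ 2). Then for every k ∈ {1,…,n}, the tuple A ⊞ₖ B is a generalized quiddity sequence of length n+m−2. -/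
/-- The product `A ⊞ₖ B`, with `1`-based index `k`.  For `1 ≤ k ≤ n-1` (i.e.
`k < A.length`) it is `(a₁,…,a_{k−1}, a_k+b₁, b₂,…,b_{m−1}, b_m+a_{k+1}, a_{k+2},…,aₙ)`,
and for `k = n` it is `(a₁+b_m, a₂,…,a_{n−1}, aₙ+b₁, b₂,…,b_{m−1})`. -/
noncomputable def boxcomp (A B : List ℂ) (k : ℕ) : List ℂ :=
  if k < A.length then
    A.take (k - 1) ++ (A.getD (k - 1) 0 + B.getD 0 0) ::
      ((B.drop 1).dropLast ++ (B.getLastD 0 + A.getD k 0) :: A.drop (k + 1))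
  else
    (A.getD 0 0 + B.getLastD 0) :: ((A.drop 1).dropLast ++
      (A.getLastD 0 + B.getD 0 0) :: (B.drop 1).dropLast)

/-!
The identity `M(a + b) = -M(a) M(0) M(b)` together with `M(0)² = -Id` lets one absorb a
quiddity sequence `(b₁, …, b_m)` into two adjacent entries `x, y`:
`M(b_m + y) Q M(x + b₁) = M(y) M(x)` whenever `M(b_m) Q M(b₁) = -Id`, where
`Q = M(b_{m-1}) ⋯ M(b₂)`. This settles `k < n`; the case `k = n` reduces to it because the
condition `M(aₙ) ⋯ M(a₁) = -Id` is invariant under cyclic rotation of the sequence.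
-/

lemma Mmat_add (a b : ℂ) : Mmat (a + b) = -(Mmat a * Mmat 0 * Mmat b) := by
  ext i j
  fin_cases i <;> fin_cases j <;> simp [Mmat]

lemma Mmat_zero_mul_self : Mmat 0 * Mmat 0 = -1 := by
  ext i j
  fin_cases i <;> fin_cases j <;> simp [Mmat, Matrix.mul_apply]

lemma Mmat_add_mul_mul_add {Q : Matrix (Fin 2) (Fin 2) ℂ} {b c : ℂ}
    (h : Mmat c * Q * Mmat b = -1) (x y : ℂ) :
    Mmat (c + y) * Q * Mmat (x + b) = Mmat y * Mmat x := by
  rw [add_comm c, add_comm x, Mmat_add y, Mmat_add b]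
  calc -(Mmat y * Mmat 0 * Mmat c) * Q * -(Mmat b * Mmat 0 * Mmat x)
      = Mmat y * Mmat 0 * (Mmat c * Q * Mmat b) * Mmat 0 * Mmat x := by noncomm_ring
    _ = -(Mmat y * (Mmat 0 * Mmat 0) * Mmat x) := by rw [h]; noncomm_ring
    _ = Mmat y * Mmat x := by rw [Mmat_zero_mul_self]; noncomm_ring

lemma Matrix.mul_eq_neg_one_comm {ι R : Type*} [Fintype ι] [DecidableEq ι] [CommRing R]
    {X Y : Matrix ι ι R} : X * Y = -1 ↔ Y * X = -1 := by
  rw [← neg_eq_iff_eq_neg, ← mul_neg, mul_eq_one_comm, neg_mul, neg_eq_iff_eq_neg]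

noncomputable def mmatProd (L : List ℂ) : Matrix (Fin 2) (Fin 2) ℂ :=
  (L.reverse.map Mmat).prod

@[simp]
lemma mmatProd_nil : mmatProd [] = 1 := rfl

@[simp]
lemma mmatProd_cons (x : ℂ) (L : List ℂ) : mmatProd (x :: L) = mmatProd L * Mmat x := by
  simp [mmatProd]

@[simp]
lemma mmatProd_append (L R : List ℂ) : mmatProd (L ++ R) = mmatProd R * mmatProd L := by
  simp [mmatProd]

lemma isGQS_iff_mmatProd (L : List ℂ) : IsGQS L ↔ mmatProd L = -1 := Iff.rfl

lemma isGQS_append_comm (L R : List ℂ) : IsGQS (L ++ R) ↔ IsGQS (R ++ L) := by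
  simp only [isGQS_iff_mmatProd, mmatProd_append, Matrix.mul_eq_neg_one_comm]

lemma mmatProd_glue {b c : ℂ} {mid : List ℂ} (hB : IsGQS (b :: (mid ++ [c])))
    (P S : List ℂ) (x y : ℂ) :
    mmatProd (P ++ (x + b) :: (mid ++ (c + y) :: S)) = mmatProd (P ++ x :: y :: S) := by
  have hB' : Mmat c * mmatProd mid * Mmat b = -1 := by
    simpa [isGQS_iff_mmatProd, mul_assoc] using hB
  simp only [mmatProd_append, mmatProd_cons]
  rw [mul_assoc (mmatProd S), mul_assoc (mmatProd S), Mmat_add_mul_mul_add hB', ← mul_assoc]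

lemma List.exists_eq_cons_append_singleton_s4 {α : Type*} {L : List α} (h : 2 ≤ L.length) :
    ∃ a mid d, L = a :: (mid ++ [d]) := by
  obtain _ | ⟨a, t⟩ := L
  · simp at h
  obtain rfl | ⟨mid, d, rfl⟩ := List.eq_nil_or_concat t
  · simp at h
  · exact ⟨a, mid, d, by simp⟩

lemma List.take_append_getElem_cons_getElem_cons_drop {α : Type*} (L : List α) (i : ℕ)
    (hi : i + 1 < L.length) :
    L.take i ++ L[i] :: L[i + 1] :: L.drop (i + 2) = L := by
  rw [← List.drop_eq_getElem_cons, ← List.drop_eq_getElem_cons, List.take_append_drop]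

lemma boxcomp_of_lt {A : List ℂ} {i : ℕ} (hi : i + 1 < A.length) (b c : ℂ) (mid : List ℂ) :
    boxcomp A (b :: (mid ++ [c])) (i + 1) =
      A.take i ++ (A[i] + b) :: (mid ++ (c + A[i + 1]) :: A.drop (i + 2)) := by
  simp [boxcomp, hi, List.getLastD, Nat.lt_of_succ_lt hi]

lemma boxcomp_of_length_le {a d b c : ℂ} {midA mid : List ℂ} {k : ℕ}
    (hk : (a :: (midA ++ [d])).length ≤ k) :
    boxcomp (a :: (midA ++ [d])) (b :: (mid ++ [c])) k =
      (a + c) :: (midA ++ (d + b) :: mid) := by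
  rw [boxcomp, if_neg (not_lt.mpr hk)]
  simp [List.getLastD]

lemma isGQS_boxcomp_of_lt {A B : List ℂ} (hAq : IsGQS A) (hBq : IsGQS B) (hm : 2 ≤ B.length)
    {k : ℕ} (hk : 1 ≤ k) (hkA : k < A.length) :
    IsGQS (boxcomp A B k) ∧ (boxcomp A B k).length = A.length + B.length - 2 := by
  obtain ⟨b, mid, c, rfl⟩ := List.exists_eq_cons_append_singleton_s4 hm
  obtain ⟨i, rfl⟩ : ∃ i, k = i + 1 := ⟨k - 1, by omega⟩
  rw [boxcomp_of_lt hkA]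
  refine ⟨?_, by simp; omega⟩
  rw [isGQS_iff_mmatProd, mmatProd_glue hBq, List.take_append_getElem_cons_getElem_cons_drop]
  exact hAq

lemma isGQS_boxcomp_of_length_le {A B : List ℂ} (hAq : IsGQS A) (hBq : IsGQS B)
    (hn : 2 ≤ A.length) (hm : 2 ≤ B.length) {k : ℕ} (hk : A.length ≤ k) :
    IsGQS (boxcomp A B k) ∧ (boxcomp A B k).length = A.length + B.length - 2 := by
  obtain ⟨a, midA, d, rfl⟩ := List.exists_eq_cons_append_singleton_s4 hn
  obtain ⟨b, mid, c, rfl⟩ := List.exists_eq_cons_append_singleton_s4 hm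
  rw [boxcomp_of_length_le hk]
  refine ⟨?_, by simp; omega⟩
  have hrot : IsGQS (midA ++ (d + b) :: (mid ++ (c + a) :: [])) := by
    rw [isGQS_iff_mmatProd, mmatProd_glue hBq, ← isGQS_iff_mmatProd,
      show midA ++ [d, a] = (midA ++ [d]) ++ [a] by simp, isGQS_append_comm]
    exact hAq
  rw [← List.singleton_append, isGQS_append_comm, add_comm a]
  simpa using hrot

/-- If `A` and `B` are generalized quiddity sequences of lengths `n, m ≥ 2`, then
`A ⊞ₖ B` is a generalized quiddity sequence of length `n+m−2`, for every
`k ∈ {1,…,n}`. -/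
theorem gqs_closed_under_boxplus (n m : ℕ) (hn : 2 ≤ n) (hm : 2 ≤ m) (A B : List ℂ)
    (hA : A.length = n) (hB : B.length = m) (hAq : IsGQS A) (hBq : IsGQS B) :
    ∀ k, 1 ≤ k → k ≤ n →
      IsGQS (boxcomp A B k) ∧ (boxcomp A B k).length = n + m - 2 := by
  subst hA hB
  intro k hk hkn
  rcases hkn.lt_or_eq with hlt | rfl
  · exact isGQS_boxcomp_of_lt hAq hBq hm hk hlt
  · exact isGQS_boxcomp_of_length_le hAq hBq hn hm le_rfl
end

section
/- Let (𝔞₁,…,𝔞ₙ) be a left matrix quiddity sequence of l×l complex matrices. Then for every i ∈ {1,…,n−1}, the tuple (𝔞₁,…,𝔞_{i−1}, 𝔞ᵢ+I, I, 𝔞_{i+1}+I, 𝔞_{i+2},…,𝔞ₙ) of length n+1 is also a left matrix quiddity sequence. -/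
/-- The 2l×2l block matrix `M(𝔞) = [[𝔞, −I], [I, O]]`. -/
noncomputable def Mblk {l : ℕ} (a : Matrix (Fin l) (Fin l) ℂ) :
    Matrix (Fin l ⊕ Fin l) (Fin l ⊕ Fin l) ℂ :=
  Matrix.fromBlocks a (-1) 1 0

/-- A left matrix quiddity sequence: a tuple `(𝔞₁,…,𝔞ₙ)` of l×l complex matrices
with `M(𝔞ₙ)·M(𝔞ₙ₋₁)···M(𝔞₁) = −Id`. -/
def IsLMQS {l : ℕ} (A : List (Matrix (Fin l) (Fin l) ℂ)) : Prop :=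
  (A.reverse.map Mblk).prod = -1

/-
The block identity `M(𝔟 + I) · M(I) · M(𝔞 + I) = M(𝔟) · M(𝔞)` means the insertion replaces two
consecutive factors of `M(𝔞ₙ)···M(𝔞₁)` by three with the same product.
-/

lemma Mblk_add_one_mul_Mblk_one_mul_Mblk_add_one {l : ℕ} (a b : Matrix (Fin l) (Fin l) ℂ) :
    Mblk (b + 1) * Mblk 1 * Mblk (a + 1) = Mblk b * Mblk a := by
  simp only [Mblk, Matrix.fromBlocks_multiply]
  congr 1 <;> noncomm_ring

lemma isLMQS_append_add_one_cons_one_cons_add_one_iff {l : ℕ}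
    (L R : List (Matrix (Fin l) (Fin l) ℂ)) (a b : Matrix (Fin l) (Fin l) ℂ) :
    IsLMQS (L ++ (a + 1) :: 1 :: (b + 1) :: R) ↔ IsLMQS (L ++ a :: b :: R) := by
  simp only [IsLMQS, List.reverse_append, List.reverse_cons, List.map_append, List.map_cons,
    List.prod_append, List.prod_cons, List.append_assoc, List.cons_append, List.nil_append]
  rw [← mul_assoc (Mblk 1), ← mul_assoc (Mblk (b + 1)), ← mul_assoc (Mblk (b + 1)),
    Mblk_add_one_mul_Mblk_one_mul_Mblk_add_one, mul_assoc]

lemma List.take_append_getD_cons_getD_cons_drop {α : Type*} (A : List α) (d : α) {j : ℕ}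
    (hj : j + 1 < A.length) :
    A.take j ++ A.getD j d :: A.getD (j + 1) d :: A.drop (j + 2) = A := by
  rw [List.getD_eq_getElem A d (by omega), List.getD_eq_getElem A d hj,
    ← List.drop_eq_getElem_cons hj, ← List.drop_eq_getElem_cons (by omega),
    List.take_append_drop]

/-- If `(𝔞₁,…,𝔞ₙ)` is a left matrix quiddity sequence then, for `1 ≤ i ≤ n−1`,
`(𝔞₁,…,𝔞_{i−1}, 𝔞ᵢ+I, I, 𝔞_{i+1}+I, 𝔞_{i+2},…,𝔞ₙ)` is a left matrix
quiddity sequence of length `n+1`. -/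
theorem lmqs_insert_one {l : ℕ} (n : ℕ) (A : List (Matrix (Fin l) (Fin l) ℂ))
    (hlen : A.length = n) (hA : IsLMQS A) :
    ∀ i, 1 ≤ i → i ≤ n - 1 →
      IsLMQS (A.take (i - 1) ++ (A.getD (i - 1) 0 + 1) ::
        (1 : Matrix (Fin l) (Fin l) ℂ) :: (A.getD i 0 + 1) :: A.drop (i + 1)) ∧
      (A.take (i - 1) ++ (A.getD (i - 1) 0 + 1) ::
        (1 : Matrix (Fin l) (Fin l) ℂ) :: (A.getD i 0 + 1) :: A.drop (i + 1)).length
        = n + 1 := by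
  rintro i hi1 hin
  obtain ⟨j, rfl⟩ : ∃ j, i = j + 1 := ⟨i - 1, by omega⟩
  rw [Nat.add_sub_cancel, isLMQS_append_add_one_cons_one_cons_add_one_iff,
    List.take_append_getD_cons_getD_cons_drop A 0 (by omega)]
  refine ⟨hA, ?_⟩
  simp only [List.length_append, List.length_take, List.length_cons, List.length_drop]
  omega
end

section
/- Let (𝔠ₖ)_{k∈ℤ} be an n-periodic sequence of l×l complex matrices (𝔠_{k+n} = 𝔠ₖ for all k). Then every bi-infinite sequence (𝔲ₖ)_{k∈ℤ} of l×l complex matrices satisfying the recurrence 𝔲_{k+1} = 𝔠ₖ·𝔲ₖ − 𝔲_{k−1} for all k ∈ ℤ is n-antiperiodic (i.e. 𝔲_{k+n} = −𝔲ₖ for all k ∈ ℤ) if and only if (𝔠₁,…,𝔠ₙ) is a left matrix quiddity sequence. -/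
/-! The pair `(𝔲ₖ, 𝔲ₖ₋₁)`, stacked into a `2l × l` matrix, is advanced one step by `M(𝔠ₖ)`,
so `n` steps starting at `k` multiply it by the transfer matrix `Tₖ = M(𝔠ₖ₊ₙ₋₁)⋯M(𝔠ₖ)`, and
`T₁` is the product defining a left matrix quiddity sequence. Since every `M(𝔞)` is invertible,
every initial pair is attained by a solution, so all solutions are `n`-antiperiodic iff
`Tₖ = −Id` for all `k`. Periodicity gives `M(𝔠ₖ) Tₖ = Tₖ₊₁ M(𝔠ₖ)`, so this condition does not
depend on `k`. -/

theorem exists_int_seq_of_equiv {α : Type*} (f : ℤ → α ≃ α) (a : α) :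
    ∃ s : ℤ → α, s 0 = a ∧ ∀ k, s (k + 1) = f k (s k) := by
  -- take the orbit of `(0, a)` under the shear `(k, x) ↦ (k + 1, f k x)`
  let σ : Equiv.Perm (ℤ × α) := Equiv.prodShear (Equiv.addRight 1) f
  have hσ : ∀ p, σ p = (p.1 + 1, f p.1 p.2) := fun p => rfl
  have fst_zpow : ∀ (k : ℤ) (p : ℤ × α), ((σ ^ k) p).1 = p.1 + k := by
    intro k
    induction k using Int.induction_on with
    | zero => simp
    | succ i ih => intro p; rw [zpow_add_one, Equiv.Perm.mul_apply, ih, hσ]; ring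
    | pred i ih =>
      intro p
      obtain ⟨q, rfl⟩ := σ.surjective p
      rw [zpow_sub_one, Equiv.Perm.mul_apply, Equiv.Perm.coe_inv, Equiv.symm_apply_apply, ih, hσ]
      ring
  refine ⟨fun k => ((σ ^ k) (0, a)).2, by simp, fun k => ?_⟩
  simp only [add_comm k 1, zpow_one_add, Equiv.Perm.mul_apply, hσ, fst_zpow, zero_add]

section Hill

variable {R : Type*} [Ring R]

def IsHillSolution (c u : ℤ → R) : Prop :=
  ∀ k, u (k + 1) = c k * u k - u (k - 1)

theorem exists_isHillSolution (c : ℤ → R) (x y : R) :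
    ∃ u : ℤ → R, IsHillSolution c u ∧ u 0 = x ∧ u (-1) = y := by
  let step : ℤ → R × R ≃ R × R := fun k =>
    { toFun := fun p => (c k * p.1 - p.2, p.1)
      invFun := fun p => (p.2, c k * p.2 - p.1)
      left_inv := fun p => by simp
      right_inv := fun p => by simp }
  obtain ⟨s, hs0, hs⟩ := exists_int_seq_of_equiv step (x, y)
  have snd_succ : ∀ k, (s (k + 1)).2 = (s k).1 := fun k => by rw [hs]; rfl
  refine ⟨fun k => (s k).1, fun k => ?_, by simp [hs0], ?_⟩
  · simp only [hs, ← snd_succ (k - 1), sub_add_cancel]; rfl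
  · simp only [← snd_succ, neg_add_cancel, hs0]

end Hill

section Transfer

variable {M : Type*} [Monoid M]

def transfer (f : ℤ → M) (k : ℤ) (n : ℕ) : M :=
  ((List.range n).map fun i : ℕ => f (k + i)).reverse.prod

@[simp]
theorem transfer_zero (f : ℤ → M) (k : ℤ) : transfer f k 0 = 1 := rfl

theorem transfer_succ (f : ℤ → M) (k : ℤ) (n : ℕ) :
    transfer f k (n + 1) = f (k + n) * transfer f k n := by
  simp [transfer, List.range_succ]

theorem transfer_succ' (f : ℤ → M) (k : ℤ) (n : ℕ) :
    transfer f k (n + 1) = transfer f (k + 1) n * f k := by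
  simp [transfer, List.range_succ_eq_map, Function.comp_def, add_assoc, add_comm (1 : ℤ)]

theorem transfer_eq_iff_transfer_add_one_eq {f : ℤ → M} {k : ℤ} {n : ℕ} {z : M}
    (hz : Commute z (f k)) (hf : IsUnit (f k)) (hper : f (k + n) = f k) :
    transfer f k n = z ↔ transfer f (k + 1) n = z := by
  have shift : f k * transfer f k n = transfer f (k + 1) n * f k := by
    rw [← transfer_succ', transfer_succ, hper]
  constructor <;> intro h <;> rw [h] at shift
  · exact (hf.mul_right_cancel (hz.eq.trans shift)).symm
  · exact hf.mul_left_cancel (shift.trans hz.eq)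

theorem transfer_eq_of_periodic {f : ℤ → M} {n : ℕ} {z : M} (hz : ∀ x, Commute z x)
    (hf : ∀ k, IsUnit (f k)) (hper : ∀ k : ℤ, f (k + n) = f k) {k₀ : ℤ}
    (h : transfer f k₀ n = z) (k : ℤ) : transfer f k n = z := by
  induction k using Int.inductionOn' (b := k₀) with
  | zero => exact h
  | succ k _ ih => exact (transfer_eq_iff_transfer_add_one_eq (hz _) (hf k) (hper k)).1 ih
  | pred k _ ih =>
    refine (transfer_eq_iff_transfer_add_one_eq (hz _) (hf _) (hper _)).2 ?_
    rwa [sub_add_cancel]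

end Transfer

open Matrix

theorem eq_neg_one_of_mul_fromRows_eq_neg {R m : Type*} [Ring R] [Fintype m] [DecidableEq m]
    (A : Matrix (m ⊕ m) (m ⊕ m) R) (h : ∀ x y : Matrix m m R, A * fromRows x y = -fromRows x y) :
    A = -1 := by
  have one_eq : (1 : Matrix (m ⊕ m) (m ⊕ m) R) = fromCols (fromRows 1 0) (fromRows 0 1) := by
    rw [fromCols_fromRows_eq_fromBlocks, fromBlocks_one]
  calc A = A * 1 := (mul_one A).symm
    _ = -1 := by rw [one_eq, mul_fromCols, h, h, fromCols_neg]

section Mblk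

variable {l : ℕ}

theorem isUnit_Mblk (a : Matrix (Fin l) (Fin l) ℂ) : IsUnit (Mblk a) :=
  ⟨⟨Mblk a, fromBlocks 0 1 (-1) a,
    by simp [Mblk, fromBlocks_multiply, ← fromBlocks_one],
    by simp [Mblk, fromBlocks_multiply, ← fromBlocks_one]⟩, rfl⟩

theorem Mblk_mul_fromRows (a x y : Matrix (Fin l) (Fin l) ℂ) :
    Mblk a * fromRows x y = fromRows (a * x - y) x := by
  simp [Mblk, fromBlocks_mul_fromRows, sub_eq_add_neg]

theorem IsHillSolution.fromRows_add_eq_transfer_mul {c u : ℤ → Matrix (Fin l) (Fin l) ℂ}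
    (hu : IsHillSolution c u) (k : ℤ) (n : ℕ) :
    fromRows (u (k + n)) (u (k + n - 1)) =
      transfer (Mblk ∘ c) k n * fromRows (u k) (u (k - 1)) := by
  induction n with
  | zero => simp
  | succ n ih =>
    rw [transfer_succ, Matrix.mul_assoc, ← ih, Function.comp_apply, Mblk_mul_fromRows, ← hu,
      Nat.cast_succ, ← add_assoc, add_sub_cancel_right]

theorem isLMQS_iff_transfer_one_eq (c : ℤ → Matrix (Fin l) (Fin l) ℂ) (n : ℕ) :
    IsLMQS ((List.range n).map fun i => c ((i : ℤ) + 1)) ↔ transfer (Mblk ∘ c) 1 n = -1 := by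
  simp only [IsLMQS, transfer, bind_pure_comp, List.map_eq_map, List.map_map, List.map_reverse,
    Function.comp_def, add_comm]

end Mblk

theorem antiperiodic_iff_lmqs_general {l : ℕ} (n : ℕ)
    (c : ℤ → Matrix (Fin l) (Fin l) ℂ) (hper : ∀ k : ℤ, c (k + n) = c k) :
    (∀ u : ℤ → Matrix (Fin l) (Fin l) ℂ,
        (∀ k : ℤ, u (k + 1) = c k * u k - u (k - 1)) →
        ∀ k : ℤ, u (k + n) = -u k) ↔
      IsLMQS ((List.range n).map fun i => c ((i : ℤ) + 1)) := by
  have transfer_eq {k₀ : ℤ} := transfer_eq_of_periodic (f := Mblk ∘ c) (k₀ := k₀)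
    Commute.neg_one_left (fun k => isUnit_Mblk (c k)) (fun k => congrArg Mblk (hper k))
  rw [isLMQS_iff_transfer_one_eq]
  constructor
  · intro hanti
    refine transfer_eq (k₀ := 0) (eq_neg_one_of_mul_fromRows_eq_neg _ fun x y => ?_) 1
    obtain ⟨u, hu, hu0, hu1⟩ := exists_isHillSolution c x y
    have hx : u (0 + n) = -x := by rw [hanti u hu, hu0]
    have hy : u (-1 + n) = -y := by rw [hanti u hu, hu1]
    have := hu.fromRows_add_eq_transfer_mul 0 n
    rw [show (0 : ℤ) + n - 1 = -1 + n by ring, hx, hy, zero_sub, hu0, hu1, ← fromRows_neg] at this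
    exact this.symm
  · intro hT u hu k
    have := IsHillSolution.fromRows_add_eq_transfer_mul hu k n
    rw [transfer_eq hT k, Matrix.neg_mul, Matrix.one_mul, fromRows_neg] at this
    exact (fromRows_inj this).1

/-- For an `n`-periodic sequence `(𝔠ₖ)_{k∈ℤ}` of l×l matrices, every solution of
`𝔲_{k+1} = 𝔠ₖ𝔲ₖ − 𝔲_{k−1}` is `n`-antiperiodic if and only if `(𝔠₁,…,𝔠ₙ)` is a
left matrix quiddity sequence. -/
theorem antiperiodic_iff_lmqs {l : ℕ} (n : ℕ) (hn : 1 ≤ n)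
    (c : ℤ → Matrix (Fin l) (Fin l) ℂ) (hper : ∀ k : ℤ, c (k + n) = c k) :
    (∀ u : ℤ → Matrix (Fin l) (Fin l) ℂ,
        (∀ k : ℤ, u (k + 1) = c k * u k - u (k - 1)) →
        ∀ k : ℤ, u (k + n) = -u k) ↔
      IsLMQS ((List.range n).map fun i => c ((i : ℤ) + 1)) :=
  antiperiodic_iff_lmqs_general n c hper
end

section
/- If (𝔞₁,…,𝔞ₙ) is a left matrix quiddity sequence, then (𝔞₁*,…,𝔞ₙ*) is a right matrix quiddity sequence, where 𝔞* denotes the entrywise complex conjugate of the matrix 𝔞. Conversely, if (𝔟₁,…,𝔟ₙ) is a right matrix quiddity sequence, then (𝔟₁*,…,𝔟ₙ*) is a left matrix quiddity sequence. -/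
/-- The 2l×2l block matrix `N(𝔟) = [[O, −I], [I, 𝔟]]`. -/
noncomputable def Nblk {l : ℕ} (b : Matrix (Fin l) (Fin l) ℂ) :
    Matrix (Fin l ⊕ Fin l) (Fin l ⊕ Fin l) ℂ :=
  Matrix.fromBlocks 0 (-1) 1 b

/-- A right matrix quiddity sequence: `N(𝔟₁)·N(𝔟₂)···N(𝔟ₙ) = −Id`. -/
def IsRMQS {l : ℕ} (B : List (Matrix (Fin l) (Fin l) ℂ)) : Prop :=
  (B.map Nblk).prod = -1

/-!
With `K = diag(I, -I)` one has `K² = 1` and `N(𝔠) K M(𝔠) = K` for every `𝔠`, which telescopes to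
`N(𝔠₁)···N(𝔠ₙ) K M(𝔠ₙ)···M(𝔠₁) = K`. Hence one side is `-Id` exactly when the other is: a sequence
is a left matrix quiddity sequence iff it is a right one. Entrywise conjugation is a ring
endomorphism commuting with `M` and `N`, so it preserves both conditions.
-/

noncomputable def Kblk (l : ℕ) : Matrix (Fin l ⊕ Fin l) (Fin l ⊕ Fin l) ℂ :=
  Matrix.fromBlocks 1 0 0 (-1)

lemma Kblk_mul_self (l : ℕ) : Kblk l * Kblk l = 1 := by
  simp [Kblk, Matrix.fromBlocks_multiply, ← Matrix.fromBlocks_one]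

lemma Nblk_mul_Kblk_mul_Mblk {l : ℕ} (c : Matrix (Fin l) (Fin l) ℂ) :
    Nblk c * Kblk l * Mblk c = Kblk l := by
  simp [Nblk, Kblk, Mblk, Matrix.fromBlocks_multiply]

lemma prod_map_Nblk_mul_Kblk_mul_prod_map_Mblk {l : ℕ} (C : List (Matrix (Fin l) (Fin l) ℂ)) :
    (C.map Nblk).prod * Kblk l * (C.reverse.map Mblk).prod = Kblk l := by
  induction C with
  | nil => simp
  | cons c C ih =>
    calc ((c :: C).map Nblk).prod * Kblk l * ((c :: C).reverse.map Mblk).prod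
        = Nblk c * ((C.map Nblk).prod * Kblk l * (C.reverse.map Mblk).prod) * Mblk c := by
          simp only [List.reverse_cons, List.map_append, List.map_cons, List.map_nil,
            List.prod_append, List.prod_cons, List.prod_nil, mul_one, mul_assoc]
      _ = Kblk l := by rw [ih, Nblk_mul_Kblk_mul_Mblk]

lemma eq_neg_one_iff_of_mul_mul_eq_of_mul_self_eq_one {R : Type*} [Ring R] {p k q : R}
    (hk : k * k = 1) (h : p * k * q = k) : p = -1 ↔ q = -1 := by
  constructor
  · rintro rfl
    calc q = k * k * q := by rw [hk, one_mul]
      _ = -k * (-1 * k * q) := by noncomm_ring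
      _ = -1 := by rw [h, neg_mul, hk]
  · rintro rfl
    calc p = p * (k * k) := by rw [hk, mul_one]
      _ = -(p * k * -1) * k := by noncomm_ring
      _ = -1 := by rw [h, neg_mul, hk]

lemma isRMQS_iff_isLMQS {l : ℕ} (A : List (Matrix (Fin l) (Fin l) ℂ)) :
    IsRMQS A ↔ IsLMQS A :=
  eq_neg_one_iff_of_mul_mul_eq_of_mul_self_eq_one (Kblk_mul_self l)
    (prod_map_Nblk_mul_Kblk_mul_prod_map_Mblk A)

lemma Mblk_map {l : ℕ} (f : ℂ →+* ℂ) (a : Matrix (Fin l) (Fin l) ℂ) :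
    (Mblk a).map f = Mblk (a.map f) := by
  simp [Mblk, Matrix.fromBlocks_map, Matrix.map_neg _ (map_neg f)]

lemma Nblk_map {l : ℕ} (f : ℂ →+* ℂ) (b : Matrix (Fin l) (Fin l) ℂ) :
    (Nblk b).map f = Nblk (b.map f) := by
  simp [Nblk, Matrix.fromBlocks_map, Matrix.map_neg _ (map_neg f)]

lemma IsLMQS.map {l : ℕ} {A : List (Matrix (Fin l) (Fin l) ℂ)} (h : IsLMQS A) (f : ℂ →+* ℂ) :
    IsLMQS (A.map fun a => a.map f) := by
  have := congrArg f.mapMatrix h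
  rw [map_list_prod, map_neg, map_one, List.map_map] at this
  simpa [IsLMQS, ← List.map_reverse, List.map_map, Function.comp_def, Mblk_map] using this

lemma IsRMQS.map {l : ℕ} {A : List (Matrix (Fin l) (Fin l) ℂ)} (h : IsRMQS A) (f : ℂ →+* ℂ) :
    IsRMQS (A.map fun a => a.map f) := by
  have := congrArg f.mapMatrix h
  rw [map_list_prod, map_neg, map_one, List.map_map] at this
  simpa [IsRMQS, List.map_map, Function.comp_def, Nblk_map] using this

/-- Entrywise complex conjugation turns left matrix quiddity sequences into right
matrix quiddity sequences, and conversely. -/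
theorem lmqs_conj_rmqs {l : ℕ} (A : List (Matrix (Fin l) (Fin l) ℂ)) :
    (IsLMQS A → IsRMQS (A.map fun a => a.map (starRingEnd ℂ))) ∧
    (IsRMQS A → IsLMQS (A.map fun a => a.map (starRingEnd ℂ))) :=
  ⟨fun h => (isRMQS_iff_isLMQS _).2 (h.map _), fun h => (isRMQS_iff_isLMQS _).1 (h.map _)⟩
end

section
/- Let (𝔞₁,𝔞₂,𝔞₃,𝔞₄,𝔞₅) be a left matrix quiddity sequence of length 5 with 𝔞₁ and 𝔞₃ invertible. Then 𝔞₁ and 𝔞₃ commute (𝔞₁𝔞₃ = 𝔞₃𝔞₁), and 𝔞₂ = 𝔞₁⁻¹(I + (𝔞₁+I)𝔞₃⁻¹), 𝔞₄ = (𝔞₁+I)𝔞₃⁻¹, and 𝔞₅ = 𝔞₁⁻¹(𝔞₃+I) (equivalently, when 𝔞₁+I is invertible, 𝔞₅ = (𝔞₁⁻¹+I)(𝔞₁+I)⁻¹(𝔞₃+I)). -/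
/-!
Since `M(𝔞)⁻¹ = [[O, I], [−I, 𝔞]]`, the quiddity equation of length 5 says
`M(𝔞₃)M(𝔞₂)M(𝔞₁) = −M(𝔞₄)⁻¹M(𝔞₅)⁻¹`, i.e. four relations among the blocks. They give
`𝔞₃𝔞₄ = 𝔞₁ + I` and `𝔞₅𝔞₁ = 𝔞₃ + I`, and conjugating `𝔞₄𝔞₅ − 𝔞₂ = I` by `𝔞₃ · _ · 𝔞₁` yields
`(I + 𝔞₁)(I + 𝔞₃) − (I + 𝔞₁ + 𝔞₃) = 𝔞₃𝔞₁`, that is `𝔞₁𝔞₃ = 𝔞₃𝔞₁`. Once `𝔞₁` and `𝔞₃` are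
invertible, the formulas for `𝔞₂, 𝔞₄, 𝔞₅` are read off from these relations.
-/

open Matrix

structure QuiddityFiveRelations {R : Type*} [Ring R] (a₁ a₂ a₃ a₄ a₅ : R) : Prop where
  mul_mul : a₃ * a₂ * a₁ = 1 + a₁ + a₃
  fourth_eq : a₄ = a₂ * a₁ - 1
  fifth_eq : a₅ = a₃ * a₂ - 1
  second_eq : a₂ = a₄ * a₅ - 1

namespace QuiddityFiveRelations

variable {R : Type*} [Ring R] {a₁ a₂ a₃ a₄ a₅ : R}

theorem mul_fourth (h : QuiddityFiveRelations a₁ a₂ a₃ a₄ a₅) : a₃ * a₄ = 1 + a₁ := by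
  rw [h.fourth_eq]
  linear_combination (norm := noncomm_ring) h.mul_mul

theorem fifth_mul (h : QuiddityFiveRelations a₁ a₂ a₃ a₄ a₅) : a₅ * a₁ = 1 + a₃ := by
  rw [h.fifth_eq]
  linear_combination (norm := noncomm_ring) h.mul_mul

theorem commute (h : QuiddityFiveRelations a₁ a₂ a₃ a₄ a₅) : Commute a₁ a₃ := by
  have h₂ : a₄ * a₅ - a₂ = 1 := by rw [h.second_eq, sub_sub_cancel]
  calc a₁ * a₃ = (1 + a₁) * (1 + a₃) - (1 + a₁ + a₃) := by noncomm_ring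
    _ = a₃ * a₄ * (a₅ * a₁) - a₃ * a₂ * a₁ := by rw [h.mul_fourth, h.fifth_mul, h.mul_mul]
    _ = a₃ * (a₄ * a₅ - a₂) * a₁ := by noncomm_ring
    _ = a₃ * a₁ := by rw [h₂, mul_one]

theorem eq_of_units {u₁ u₃ : Rˣ} (h : QuiddityFiveRelations (u₁ : R) a₂ u₃ a₄ a₅) :
    a₂ = ↑u₁⁻¹ * (1 + (u₁ + 1) * ↑u₃⁻¹) ∧ a₄ = (u₁ + 1) * ↑u₃⁻¹ ∧ a₅ = ↑u₁⁻¹ * (u₃ + 1) := by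
  have h₄ : a₄ = (u₁ + 1) * ↑u₃⁻¹ := by
    rw [← ((h.commute.symm.add_right (Commute.one_right _)).units_inv_left).eq,
      Units.eq_inv_mul_iff_mul_eq, h.mul_fourth, add_comm]
  have h₅ : a₅ = ↑u₁⁻¹ * (u₃ + 1) := by
    rw [((h.commute.add_right (Commute.one_right _)).units_inv_left).eq,
      Units.eq_mul_inv_iff_mul_eq, h.fifth_mul, add_comm]
  have h₂ : a₂ = ↑u₁⁻¹ * (1 + a₄) := by
    have hc₄ : Commute (u₁ : R) a₄ :=
      h₄ ▸ ((Commute.refl _).add_right (Commute.one_right _)).mul_right h.commute.units_inv_right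
    rw [((Commute.one_right _).add_right hc₄).units_inv_left.eq,
      Units.eq_mul_inv_iff_mul_eq, h.fourth_eq, add_sub_cancel]
  exact ⟨h₄ ▸ h₂, h₄, h₅⟩

end QuiddityFiveRelations

theorem Mblk_mul_fromBlocks {l : ℕ} (a p q r s : Matrix (Fin l) (Fin l) ℂ) :
    Mblk a * fromBlocks p q r s = fromBlocks (a * p - r) (a * q - s) p q := by
  simp [Mblk, fromBlocks_multiply, sub_eq_add_neg]

theorem Mblk_inv {l : ℕ} (a : Matrix (Fin l) (Fin l) ℂ) : (Mblk a)⁻¹ = fromBlocks 0 1 (-1) a :=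
  inv_eq_right_inv (by simp [Mblk_mul_fromBlocks, ← fromBlocks_one])

theorem IsLMQS.quiddityFiveRelations {l : ℕ} {a₁ a₂ a₃ a₄ a₅ : Matrix (Fin l) (Fin l) ℂ}
    (h : IsLMQS [a₁, a₂, a₃, a₄, a₅]) : QuiddityFiveRelations a₁ a₂ a₃ a₄ a₅ := by
  have h' : Mblk a₃ * (Mblk a₂ * Mblk a₁) = -((Mblk a₄)⁻¹ * (Mblk a₅)⁻¹) := by
    rw [← Matrix.mul_inv_rev, ← neg_eq_iff_eq_neg, eq_comm]
    refine inv_eq_right_inv ?_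
    simpa [IsLMQS, mul_assoc] using congrArg Neg.neg h
  rw [Mblk_inv, Mblk_inv, show Mblk a₁ = fromBlocks a₁ (-1) 1 0 from rfl, Mblk_mul_fromBlocks,
    Mblk_mul_fromBlocks, fromBlocks_multiply, fromBlocks_neg, fromBlocks_inj] at h'
  obtain ⟨h₁₁, h₁₂, h₂₁, h₂₂⟩ := h'
  constructor
  · linear_combination (norm := noncomm_ring) h₁₁
  · linear_combination (norm := noncomm_ring) -h₂₁
  · linear_combination (norm := noncomm_ring) h₁₂
  · linear_combination (norm := noncomm_ring) -h₂₂

/-- Every left matrix quiddity sequence `(𝔞₁,…,𝔞₅)` of length 5 with `𝔞₁, 𝔞₃`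
invertible satisfies: `𝔞₁` and `𝔞₃` commute, `𝔞₂ = 𝔞₁⁻¹(I+(𝔞₁+I)𝔞₃⁻¹)`,
`𝔞₄ = (𝔞₁+I)𝔞₃⁻¹` and `𝔞₅ = 𝔞₁⁻¹(𝔞₃+I)`. -/
theorem lmqs_length_five_form {l : ℕ} (a₁ a₂ a₃ a₄ a₅ : Matrix (Fin l) (Fin l) ℂ)
    (h : IsLMQS [a₁, a₂, a₃, a₄, a₅]) (h1 : IsUnit a₁) (h3 : IsUnit a₃) :
    a₁ * a₃ = a₃ * a₁ ∧
    a₂ = a₁⁻¹ * (1 + (a₁ + 1) * a₃⁻¹) ∧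
    a₄ = (a₁ + 1) * a₃⁻¹ ∧
    a₅ = a₁⁻¹ * (a₃ + 1) := by
  obtain ⟨u₁, rfl⟩ := h1
  obtain ⟨u₃, rfl⟩ := h3
  have rel := h.quiddityFiveRelations
  simp only [← coe_units_inv]
  exact ⟨rel.commute, rel.eq_of_units⟩
end

section
/- Let (𝔭₁,…,𝔭ₙ; 𝔮₁,…,𝔮ₙ) be a left matrix quiddity bi-sequence of length n. Then for every k ∈ {1,…,n−1}, the pair of tuples (𝔭₁,…,𝔭_{k−1}, 𝔭ₖ+I, I, 𝔭_{k+1}−𝔮_{k+1}, 𝔭_{k+2},…,𝔭ₙ; 𝔮₁,…,𝔮_{k−1}, 𝔮ₖ, −I, 𝔮_{k+1}, 𝔮_{k+2},…,𝔮ₙ) is a left matrix quiddity bi-sequence of length n+1. -/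
/-- The 2l×2l block matrix `M(𝔭;𝔮) = [[𝔭, 𝔮], [I, O]]`. -/
noncomputable def Mb {l : ℕ} (p q : Matrix (Fin l) (Fin l) ℂ) :
    Matrix (Fin l ⊕ Fin l) (Fin l ⊕ Fin l) ℂ :=
  Matrix.fromBlocks p q 1 0

/-- A left matrix quiddity bi-sequence: a pair of tuples
`(𝔭₁,…,𝔭ₙ; 𝔮₁,…,𝔮ₙ)` with `M(𝔭ₙ;𝔮ₙ)·M(𝔭ₙ₋₁;𝔮ₙ₋₁)···M(𝔭₁;𝔮₁) = −Id`. -/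
def IsLMQB {l : ℕ} (P Q : List (Matrix (Fin l) (Fin l) ℂ)) : Prop :=
  P.length = Q.length ∧ (((P.zip Q).reverse.map fun x => Mb x.1 x.2).prod = -1)

/-! The inserted factors recombine: `M(𝔭 − 𝔮; 𝔮) · M(I; −I) · M(𝔭' + I; 𝔮') = M(𝔭; 𝔮) · M(𝔭'; 𝔮')`
by a direct block computation, so the inserted sequence has the same product as the old one. -/

theorem List.eq_take_append_getD_cons_getD_cons_drop {α : Type*} (L : List α) (d : α) {i : ℕ}
    (hi : i + 1 < L.length) :
    L = L.take i ++ L.getD i d :: L.getD (i + 1) d :: L.drop (i + 2) := by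
  rw [List.getD_eq_getElem _ _ (by omega), List.getD_eq_getElem _ _ hi,
    ← List.drop_eq_getElem_cons hi, ← List.drop_eq_getElem_cons, List.take_append_drop]

section
variable {l : ℕ}

theorem Mb_sub_mul_Mb_one_neg_one_mul_Mb_add_one (a b c d : Matrix (Fin l) (Fin l) ℂ) :
    Mb (b - d) d * Mb 1 (-1) * Mb (a + 1) c = Mb b d * Mb a c := by
  simp only [Mb, Matrix.fromBlocks_multiply, Matrix.fromBlocks_inj]
  refine ⟨?_, ?_, ?_, ?_⟩ <;> noncomm_ring

noncomputable def mbProd (P Q : List (Matrix (Fin l) (Fin l) ℂ)) :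
    Matrix (Fin l ⊕ Fin l) (Fin l ⊕ Fin l) ℂ :=
  ((P.zip Q).reverse.map fun x => Mb x.1 x.2).prod

theorem mbProd_cons_cons (p q : Matrix (Fin l) (Fin l) ℂ) (P Q : List (Matrix (Fin l) (Fin l) ℂ)) :
    mbProd (p :: P) (q :: Q) = mbProd P Q * Mb p q := by
  simp [mbProd]

theorem mbProd_append {P₁ Q₁ : List (Matrix (Fin l) (Fin l) ℂ)} (h : P₁.length = Q₁.length)
    (P₂ Q₂ : List (Matrix (Fin l) (Fin l) ℂ)) :
    mbProd (P₁ ++ P₂) (Q₁ ++ Q₂) = mbProd P₂ Q₂ * mbProd P₁ Q₁ := by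
  simp [mbProd, List.zip_append h]

theorem mbProd_insert {P₁ Q₁ : List (Matrix (Fin l) (Fin l) ℂ)} (h : P₁.length = Q₁.length)
    (P₂ Q₂ : List (Matrix (Fin l) (Fin l) ℂ)) (a b c d : Matrix (Fin l) (Fin l) ℂ) :
    mbProd (P₁ ++ (a + 1) :: 1 :: (b - d) :: P₂) (Q₁ ++ c :: -1 :: d :: Q₂) =
      mbProd (P₁ ++ a :: b :: P₂) (Q₁ ++ c :: d :: Q₂) := by
  simp only [mbProd_append h, mbProd_cons_cons, mul_assoc,
    ← Mb_sub_mul_Mb_one_neg_one_mul_Mb_add_one a b c d]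

end

/-- From a left matrix quiddity bi-sequence of length `n`, for each `1 ≤ k ≤ n−1`
one obtains a left matrix quiddity bi-sequence of length `n+1`:
`(𝔭₁,…,𝔭_{k−1}, 𝔭ₖ+I, I, 𝔭_{k+1}−𝔮_{k+1}, 𝔭_{k+2},…,𝔭ₙ;`
` 𝔮₁,…,𝔮_{k−1}, 𝔮ₖ, −I, 𝔮_{k+1}, 𝔮_{k+2},…,𝔮ₙ)`. -/
theorem lmqb_insert {l : ℕ} (n : ℕ) (P Q : List (Matrix (Fin l) (Fin l) ℂ))
    (hP : P.length = n) (hQ : Q.length = n) (h : IsLMQB P Q) :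
    ∀ k, 1 ≤ k → k ≤ n - 1 →
      ∀ P' Q' : List (Matrix (Fin l) (Fin l) ℂ),
        P' = P.take (k - 1) ++ (P.getD (k - 1) 0 + 1) ::
          (1 : Matrix (Fin l) (Fin l) ℂ) ::
          (P.getD k 0 - Q.getD k 0) :: P.drop (k + 1) →
        Q' = Q.take (k - 1) ++ Q.getD (k - 1) 0 ::
          (-1 : Matrix (Fin l) (Fin l) ℂ) :: Q.getD k 0 :: Q.drop (k + 1) →
        IsLMQB P' Q' ∧ P'.length = n + 1 ∧ Q'.length = n + 1 := by
  rintro k hk hkn P' Q' rfl rfl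
  obtain ⟨i, rfl⟩ : ∃ i, k = i + 1 := ⟨k - 1, by omega⟩
  simp only [Nat.add_sub_cancel]
  have hsplitP := P.eq_take_append_getD_cons_getD_cons_drop 0 (i := i) (by omega)
  have hsplitQ := Q.eq_take_append_getD_cons_getD_cons_drop 0 (i := i) (by omega)
  have htake : (P.take i).length = (Q.take i).length := by simp [hP, hQ]
  refine ⟨⟨by simp; omega, ?_⟩, by simp; omega, by simp; omega⟩
  change mbProd _ _ = -1
  rw [mbProd_insert htake, ← hsplitP, ← hsplitQ]
  exact h.2
end

section
/- Let 𝔞₁,…,𝔞ₘ be invertible l×l complex matrices and let 𝔔ₘ be the ml×ml block tridiagonal matrix whose diagonal blocks, from top-left to bottom-right, are 𝔞ₘ, 𝔞ₘ₋₁, …, 𝔞₁, whose blocks immediately above and below the diagonal all equal the l×l identity matrix I, and whose remaining blocks are zero (with 𝔔₁ = 𝔞₁). Then det(𝔔ₘ) = det(𝔭ₘ(𝔞₁,…,𝔞ₘ)) for all m ≥ 1. -/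
/-- Shifted left matrix signed Chebyshev polynomials: `cheb a (j+1)` is the
polynomial `𝔭ⱼ(a₁,…,aⱼ)`, with `cheb a 0 = 𝔭₋₁ = O` and `cheb a 1 = 𝔭₀ = I`,
and `𝔭ₘ(𝔞₁,…,𝔞ₘ) = 𝔞ₘ·𝔭ₘ₋₁(𝔞₁,…,𝔞ₘ₋₁) − 𝔭ₘ₋₂(𝔞₁,…,𝔞ₘ₋₂)`. -/
noncomputable def cheb {l : ℕ} (a : ℕ → Matrix (Fin l) (Fin l) ℂ) :
    ℕ → Matrix (Fin l) (Fin l) ℂ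
  | 0 => 0
  | 1 => 1
  | (k + 2) => a (k + 1) * cheb a (k + 1) - cheb a k

/-- The ml×ml block tridiagonal matrix `𝔔ₘ` with diagonal blocks
`𝔞ₘ, 𝔞ₘ₋₁, …, 𝔞₁` (from top-left to bottom-right), identity blocks immediately
above and below the diagonal, and zero blocks elsewhere. -/
noncomputable def Qtri (m l : ℕ) (a : ℕ → Matrix (Fin l) (Fin l) ℂ) :
    Matrix (Fin m × Fin l) (Fin m × Fin l) ℂ :=
  fun p q =>
    if p.1 = q.1 then a (m - (p.1 : ℕ)) p.2 q.2
    else if (p.1 : ℕ) + 1 = (q.1 : ℕ) ∨ (q.1 : ℕ) + 1 = (p.1 : ℕ) then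
      (if p.2 = q.2 then 1 else 0)
    else 0

/-!
Write `𝔔ₘ(X, Y)` for `𝔔ₘ` with its first block row replaced by `[X, Y, 0, …, 0]`, so that
`𝔔ₘ = 𝔔ₘ(𝔞ₘ, I)`. Then `det 𝔔ₘ(X, Y) = det(X 𝔭ₘ₋₁ − Y 𝔭ₘ₋₂)` for all `X`, `Y`, with no
invertibility needed: the identity block just below the top-left corner is a pivot. Swapping the
first two block rows (sign `(-1)ˡ`) moves it to the corner, and its Schur complement is
`𝔔ₘ₋₁(Y − X 𝔞ₘ₋₁, −X)`; by induction its determinant is `det(−(X 𝔭ₘ₋₁ − Y 𝔭ₘ₋₂)) =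
(-1)ˡ det(X 𝔭ₘ₋₁ − Y 𝔭ₘ₋₂)`.
-/

open Matrix Equiv

def finSuccProdEquiv (n : ℕ) (α : Type*) : α ⊕ (Fin n × α) ≃ Fin (n + 1) × α where
  toFun := Sum.elim (fun x => (0, x)) (fun p => (p.1.succ, p.2))
  invFun p := Fin.cases (Sum.inl p.2) (fun i => Sum.inr (i, p.2)) p.1
  left_inv := by rintro (x | ⟨i, x⟩) <;> simp
  right_inv := by rintro ⟨i, x⟩; cases i using Fin.cases <;> simp

@[simp] lemma finSuccProdEquiv_inl {n : ℕ} {α : Type*} (x : α) :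
    finSuccProdEquiv n α (Sum.inl x) = (0, x) := rfl

@[simp] lemma finSuccProdEquiv_inr {n : ℕ} {α : Type*} (i : Fin n) (x : α) :
    finSuccProdEquiv n α (Sum.inr (i, x)) = (i.succ, x) := rfl

lemma sign_prodCongrLeft_swap {α β : Type*} [Fintype α] [DecidableEq α] [Fintype β]
    [DecidableEq β] {x y : β} (hxy : x ≠ y) :
    Perm.sign (prodCongrLeft fun _ : α => swap x y) = (-1) ^ Fintype.card α := by
  simp [Perm.sign_prodCongrLeft, Perm.sign_swap hxy]

@[simp] lemma Qtri_apply (m l : ℕ) (a : ℕ → Matrix (Fin l) (Fin l) ℂ) (i i' : Fin m)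
    (j j' : Fin l) :
    Qtri m l a (i, j) (i', j') =
      if i = i' then a (m - i) j j'
      else if (i : ℕ) + 1 = i' ∨ (i' : ℕ) + 1 = i then (1 : Matrix (Fin l) (Fin l) ℂ) j j'
      else 0 := by
  simp [Qtri, one_apply]

noncomputable def QtriTopRow (m l : ℕ) (a : ℕ → Matrix (Fin l) (Fin l) ℂ)
    (X Y : Matrix (Fin l) (Fin l) ℂ) : Matrix (Fin m × Fin l) (Fin m × Fin l) ℂ :=
  of fun p q =>
    if (p.1 : ℕ) = 0 then
      if (q.1 : ℕ) = 0 then X p.2 q.2 else if (q.1 : ℕ) = 1 then Y p.2 q.2 else 0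
    else Qtri m l a p q

lemma QtriTopRow_self_one (m l : ℕ) (a : ℕ → Matrix (Fin l) (Fin l) ℂ) :
    QtriTopRow m l a (a m) 1 = Qtri m l a := by
  ext ⟨i, j⟩ ⟨i', j'⟩
  simp only [QtriTopRow, of_apply, Qtri_apply]
  split_ifs <;> simp_all [Fin.ext_iff]

lemma det_QtriTopRow_one (l : ℕ) (a : ℕ → Matrix (Fin l) (Fin l) ℂ)
    (X Y : Matrix (Fin l) (Fin l) ℂ) : (QtriTopRow 1 l a X Y).det = X.det := by
  rw [← det_submatrix_equiv_self (uniqueProd (Fin l) (Fin 1)).symm]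
  rfl

lemma neg_one_pow_mul_det_QtriTopRow_succ_succ (n l : ℕ) (a : ℕ → Matrix (Fin l) (Fin l) ℂ)
    (X Y : Matrix (Fin l) (Fin l) ℂ) :
    (-1) ^ l * (QtriTopRow (n + 2) l a X Y).det =
      (QtriTopRow (n + 1) l a (Y - X * a (n + 1)) (-X)).det := by
  set M := QtriTopRow (n + 2) l a X Y
  set e := finSuccProdEquiv (n + 1) (Fin l)
  -- rows in block order 1, 0, 2, 3, …; columns in natural order
  set σ : Perm (Fin (n + 2) × Fin l) := prodCongrLeft fun _ => swap 0 1
  set N := M.submatrix (σ ∘ e) e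
  have hN₁₁ : N.toBlocks₁₁ = 1 := by
    ext j j'
    simp [N, M, σ, e, toBlocks₁₁, QtriTopRow, one_apply]
  have hSchur : N.toBlocks₂₂ - N.toBlocks₂₁ * N.toBlocks₁₂ =
      QtriTopRow (n + 1) l a (Y - X * a (n + 1)) (-X) := by
    ext ⟨i, j⟩ ⟨i', j'⟩
    cases i using Fin.cases with
    | zero =>
      simp [N, M, σ, e, toBlocks₁₂, toBlocks₂₁, toBlocks₂₂, QtriTopRow, mul_apply]
      cases i' using Fin.cases with
      | zero => simp
      | succ k' =>
        have hk' : (1 : Fin (n + 2)) ≠ k'.succ.succ := by simp [Fin.ext_iff]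
        simp [hk', ← mul_apply, apply_ite (Neg.neg : ℂ → ℂ)]
    | succ k =>
      have hk : swap (0 : Fin (n + 2)) 1 k.succ.succ = k.succ.succ :=
        swap_apply_of_ne_of_ne (Fin.succ_ne_zero _) (by simp [Fin.ext_iff])
      simp [N, M, σ, e, hk, toBlocks₁₂, toBlocks₂₁, toBlocks₂₂, QtriTopRow, mul_apply]
  calc (-1) ^ l * M.det = (M.submatrix σ id).det := by
        rw [det_permute, sign_prodCongrLeft_swap zero_ne_one, Fintype.card_fin]; push_cast; rfl
    _ = N.det := by rw [← det_submatrix_equiv_self e, submatrix_submatrix]; rfl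
    _ = (fromBlocks 1 N.toBlocks₁₂ N.toBlocks₂₁ N.toBlocks₂₂).det := by
        rw [← hN₁₁, fromBlocks_toBlocks]
    _ = _ := by rw [det_fromBlocks_one₁₁, hSchur]

theorem det_QtriTopRow (n l : ℕ) (a : ℕ → Matrix (Fin l) (Fin l) ℂ)
    (X Y : Matrix (Fin l) (Fin l) ℂ) :
    (QtriTopRow (n + 1) l a X Y).det = (X * cheb a (n + 1) - Y * cheb a n).det := by
  induction n generalizing X Y with
  | zero => simp [det_QtriTopRow_one, cheb]
  | succ n ih =>
    have hcheb : (Y - X * a (n + 1)) * cheb a (n + 1) - -X * cheb a n =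
        -(X * cheb a (n + 2) - Y * cheb a (n + 1)) := by
      rw [cheb]; noncomm_ring
    refine mul_left_cancel₀ (pow_ne_zero l (neg_ne_zero.mpr one_ne_zero)) ?_
    rw [neg_one_pow_mul_det_QtriTopRow_succ_succ, ih, hcheb, det_neg, Fintype.card_fin]

theorem det_Qtri_eq_det_cheb_general (m l : ℕ)
    (a : ℕ → Matrix (Fin l) (Fin l) ℂ) :
    (Qtri m l a).det = (cheb a (m + 1)).det := by
  cases m with
  | zero => simp [cheb]
  | succ n => rw [← QtriTopRow_self_one, det_QtriTopRow, one_mul]; rfl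

/-- `det(𝔔ₘ) = det(𝔭ₘ(𝔞₁,…,𝔞ₘ))` for all `m ≥ 1`, where `𝔞₁,…,𝔞ₘ` are
invertible. -/
theorem det_Qtri_eq_det_cheb (m l : ℕ) (hm : 1 ≤ m)
    (a : ℕ → Matrix (Fin l) (Fin l) ℂ)
    (hinv : ∀ k, 1 ≤ k → k ≤ m → IsUnit (a k)) :
    (Qtri m l a).det = (cheb a (m + 1)).det :=
  det_Qtri_eq_det_cheb_general m l a
end

section
/- Let N ≥ 2, let (𝔞ₙ)_{n≥1} be an N-periodic sequence of l×l complex matrices (𝔞_{n+N} = 𝔞ₙ), and let 𝔪 be an l×l complex matrix commuting with 𝔞₁,…,𝔞_N. Then every solution (𝔶ₖ)_{k≥0} of the recurrence 𝔶_{n+1} = 𝔞ₙ·𝔶ₙ − 𝔶_{n−1} (n ≥ 1) satisfies 𝔶_{k+N} = 𝔪·𝔶ₖ for all k ≥ 0 if and only if 𝔭_{N−1}(𝔞₁,…,𝔞_{N−1}) = O, 𝔭_{N−2}(𝔞₂,…,𝔞_{N−1}) = −𝔪, 𝔭_N(𝔞₁,…,𝔞_N) = 𝔪, and 𝔭_{N−1}(𝔞₂,…,𝔞_N)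 = O. Moreover, under these conditions, M(𝔞_N)·M(𝔞_{N−1})···M(𝔞₁) equals the 2l×2l block diagonal matrix with both diagonal blocks equal to 𝔪. -/
theorem Function.Periodic.forall_of_forall_lt {α : Type*} {b : ℕ → α} {N : ℕ}
    (hb : Function.Periodic b N) (hN : 0 < N) {P : α → Prop} (h : ∀ k < N, P (b k)) :
    ∀ k, P (b k) :=
  fun k => hb.map_mod_nat k ▸ h _ (Nat.mod_lt k hN)

section Recurrence

variable {R : Type*} [Ring R] (a : ℕ → R)

def IsChebyshevSolution (y : ℕ → R) : Prop :=
  ∀ k, y (k + 2) = a (k + 1) * y (k + 1) - y k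

variable {a}

theorem isChebyshevSolution_iff {y : ℕ → R} :
    IsChebyshevSolution a y ↔ ∀ n, 1 ≤ n → y (n + 1) = a n * y n - y (n - 1) := by
  refine ⟨fun hy n hn => ?_, fun hy k => hy (k + 1) le_add_self⟩
  obtain ⟨k, rfl⟩ := Nat.exists_eq_add_of_le' hn
  exact hy k

namespace IsChebyshevSolution

variable {y z : ℕ → R}

theorem add (hy : IsChebyshevSolution a y) (hz : IsChebyshevSolution a z) :
    IsChebyshevSolution a (y + z) := fun k => by
  simp only [Pi.add_apply, hy k, hz k]
  noncomm_ring

theorem mul_const (hy : IsChebyshevSolution a y) (c : R) :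
    IsChebyshevSolution a fun k => y k * c := fun k => by
  simp only [hy k, sub_mul, mul_assoc]

theorem const_mul (hy : IsChebyshevSolution a y) {m : R} (hm : ∀ k, Commute m (a (k + 1))) :
    IsChebyshevSolution a fun k => m * y k := fun k => by
  simp only [hy k, mul_sub, ← mul_assoc, (hm k).eq]

theorem comp_add (hy : IsChebyshevSolution a y) {N : ℕ}
    (hper : Function.Periodic (fun k => a (k + 1)) N) :
    IsChebyshevSolution a fun k => y (k + N) := fun k => by
  have h := hy (k + N)
  rw [show a (k + N + 1) = a (k + 1) from hper k] at h
  simpa only [Nat.add_right_comm _ N] using h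

theorem ext (hy : IsChebyshevSolution a y) (hz : IsChebyshevSolution a z) (h₀ : y 0 = z 0)
    (h₁ : y 1 = z 1) : y = z := by
  funext k
  induction k using Nat.twoStepInduction with
  | zero => exact h₀
  | one => exact h₁
  | more k ihk ihk₁ => rw [hy, hz, ihk, ihk₁]

theorem forall_add_eq_mul_iff (hy : IsChebyshevSolution a y) {N : ℕ}
    (hper : Function.Periodic (fun k => a (k + 1)) N) {m : R} (hm : ∀ k, Commute m (a (k + 1))) :
    (∀ k, y (k + N) = m * y k) ↔ y N = m * y 0 ∧ y (N + 1) = m * y 1 := by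
  refine ⟨fun h => ⟨by simpa using h 0, by simpa [add_comm] using h 1⟩, fun ⟨h₀, h₁⟩ => ?_⟩
  refine congrFun ((hy.comp_add hper).ext (hy.const_mul hm) ?_ ?_)
  · simpa using h₀
  · simpa [add_comm] using h₁

end IsChebyshevSolution

end Recurrence

section Chebyshev

variable {l : ℕ} (a : ℕ → Matrix (Fin l) (Fin l) ℂ)

noncomputable def chebDual : ℕ → Matrix (Fin l) (Fin l) ℂ
  | 0 => 1
  | k + 1 => -cheb (fun i => a (i + 1)) k

theorem isChebyshevSolution_cheb : IsChebyshevSolution a (cheb a) := fun _ => rfl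

theorem isChebyshevSolution_chebDual : IsChebyshevSolution a (chebDual a)
  | 0 => by simp [chebDual, cheb]
  | k + 1 => by
    simp only [chebDual, cheb, mul_neg]
    abel

variable {a}

theorem IsChebyshevSolution.eq_cheb_mul_add_chebDual_mul {y : ℕ → Matrix (Fin l) (Fin l) ℂ}
    (hy : IsChebyshevSolution a y) : y = fun k => cheb a k * y 1 + chebDual a k * y 0 :=
  hy.ext
    (((isChebyshevSolution_cheb a).mul_const _).add ((isChebyshevSolution_chebDual a).mul_const _))
    (by simp [cheb, chebDual]) (by simp [cheb, chebDual])

theorem forall_isChebyshevSolution_add_eq_mul_iff {N : ℕ} {m : Matrix (Fin l) (Fin l) ℂ} :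
    (∀ y, IsChebyshevSolution a y → ∀ k, y (k + N) = m * y k) ↔
      (∀ k, cheb a (k + N) = m * cheb a k) ∧ (∀ k, chebDual a (k + N) = m * chebDual a k) := by
  refine ⟨fun h => ⟨h _ (isChebyshevSolution_cheb a), h _ (isChebyshevSolution_chebDual a)⟩,
    fun ⟨hc, hd⟩ y hy k => ?_⟩
  rw [hy.eq_cheb_mul_add_chebDual_mul]
  simp only [hc, hd, mul_add, mul_assoc]

theorem prod_Mblk_eq (k : ℕ) :
    (((List.range k).map fun i => Mblk (a (i + 1))).reverse).prod =
      Matrix.fromBlocks (cheb a (k + 1)) (chebDual a (k + 1)) (cheb a k) (chebDual a k) := by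
  induction k with
  | zero => simp [cheb, chebDual, ← Matrix.fromBlocks_one]
  | succ k ih =>
    rw [List.range_succ, List.map_append, List.reverse_append, List.prod_append, ih]
    simp only [List.map_cons, List.map_nil, List.reverse_cons, List.reverse_nil, List.nil_append,
      List.prod_cons, List.prod_nil, mul_one, Mblk, Matrix.fromBlocks_multiply]
    simp [isChebyshevSolution_cheb a k, isChebyshevSolution_chebDual a k, sub_eq_add_neg]

end Chebyshev

/-- For an `N`-periodic sequence `(𝔞ₙ)_{n≥1}` and a matrix `𝔪` commuting with
`𝔞₁,…,𝔞_N`: every solution of `𝔶_{n+1} = 𝔞ₙ𝔶ₙ − 𝔶_{n−1}` has monodromy `𝔪`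
(i.e. `𝔶_{k+N} = 𝔪𝔶ₖ` for all `k ≥ 0`) if and only if
`𝔭_{N−1}(𝔞₁,…,𝔞_{N−1}) = O`, `𝔭_{N−2}(𝔞₂,…,𝔞_{N−1}) = −𝔪`,
`𝔭_N(𝔞₁,…,𝔞_N) = 𝔪` and `𝔭_{N−1}(𝔞₂,…,𝔞_N) = O`.  Moreover, under these
conditions `M(𝔞_N)···M(𝔞₁)` is the block diagonal matrix `diag(𝔪, 𝔪)`. -/
theorem monodromy_iff_chebyshev {l : ℕ} (N : ℕ) (hN : 2 ≤ N)
    (a : ℕ → Matrix (Fin l) (Fin l) ℂ) (hper : ∀ n, 1 ≤ n → a (n + N) = a n)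
    (m : Matrix (Fin l) (Fin l) ℂ)
    (hcomm : ∀ k, 1 ≤ k → k ≤ N → m * a k = a k * m) :
    ((∀ y : ℕ → Matrix (Fin l) (Fin l) ℂ,
        (∀ n, 1 ≤ n → y (n + 1) = a n * y n - y (n - 1)) →
        ∀ k, y (k + N) = m * y k) ↔
      (cheb a N = 0 ∧ cheb (fun i => a (i + 1)) (N - 1) = -m ∧
        cheb a (N + 1) = m ∧ cheb (fun i => a (i + 1)) N = 0)) ∧
    ((cheb a N = 0 ∧ cheb (fun i => a (i + 1)) (N - 1) = -m ∧
        cheb a (N + 1) = m ∧ cheb (fun i => a (i + 1)) N = 0) →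
      (((List.range N).map fun i => Mblk (a (i + 1))).reverse).prod =
        Matrix.fromBlocks m 0 0 m) := by
  obtain ⟨n, rfl⟩ : ∃ n, N = n + 1 := ⟨N - 1, by omega⟩
  have hper' : Function.Periodic (fun k => a (k + 1)) (n + 1) := fun k => by
    simpa only [Nat.add_right_comm k] using hper (k + 1) le_add_self
  have hm : ∀ k, Commute m (a (k + 1)) :=
    hper'.forall_of_forall_lt n.succ_pos fun k hk => hcomm (k + 1) le_add_self hk
  refine ⟨?_, fun ⟨h₁, h₂, h₃, h₄⟩ => ?_⟩
  · simp_rw [← isChebyshevSolution_iff]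
    rw [forall_isChebyshevSolution_add_eq_mul_iff,
      (isChebyshevSolution_cheb a).forall_add_eq_mul_iff hper' hm,
      (isChebyshevSolution_chebDual a).forall_add_eq_mul_iff hper' hm]
    simp only [cheb, chebDual, mul_zero, mul_one, neg_eq_iff_eq_neg, neg_zero,
      add_tsub_cancel_right]
    tauto
  · rw [Nat.add_sub_cancel] at h₂
    rw [prod_Mblk_eq, h₁, h₃, chebDual, chebDual, h₂, h₄, neg_neg, neg_zero]
end
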